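/- For every α₀ > 0 there exist C, C' > 0 such that for all d ∈ ℕ, d ≥ 1, and all real α, β with α ≥ α₀ and α + |β| ≤ 1: | ∑_{k=0}^d 2^{−d} C(d,k) (−1)^k h( (1 − 2k/d)α + β ) | ≤ C' e^{−C d}, where h(ρ) := ( √(1 − ρ²) + ρ(π − arccos ρ) ) / (2π) for ρ ∈ [−1, 1]. -/

import Mathlib

set_option maxHeartbeats 1000000
open Real Finset

/-- `h(ρ) = (√(1−ρ²) + ρ(π − arccos ρ))/(2π)`, the value of `E[ReLU(G₁)ReLU(G₂)]` for
`ρ`-correlated standard Gaussians. -/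
noncomputable def hRelu (ρ : ℝ) : ℝ :=
  (Real.sqrt (1 - ρ ^ 2) + ρ * (π - Real.arccos ρ)) / (2 * π)

namespace Stmt13

noncomputable def bm (m : ℕ) : ℝ := (Nat.centralBinom m : ℝ) / 4 ^ m

lemma bm_nonneg (m : ℕ) : 0 ≤ bm m := by
  unfold bm; positivity

lemma bm_zero : bm 0 = 1 := by simp [bm, Nat.centralBinom]

lemma centralBinom_le (m : ℕ) : (Nat.centralBinom m : ℕ) ≤ 4 ^ m := by
  have h1 : Nat.centralBinom m ≤ ∑ i ∈ range (2 * m + 1), (2 * m).choose i := by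
    rw [Nat.centralBinom]
    exact Finset.single_le_sum (fun i _ => Nat.zero_le _)
      (by simp [Nat.lt_succ_iff]; omega)
  calc Nat.centralBinom m ≤ ∑ i ∈ range (2 * m + 1), (2 * m).choose i := h1
    _ = 2 ^ (2 * m) := Nat.sum_range_choose (2 * m)
    _ = 4 ^ m := by rw [pow_mul]; norm_num

lemma bm_le_one (m : ℕ) : bm m ≤ 1 := by
  rw [bm, div_le_one (by positivity)]
  exact_mod_cast centralBinom_le m

lemma bm_rec (m : ℕ) : (2 * (m : ℝ) + 2) * bm (m + 1) = (2 * m + 1) * bm m := by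
  have h := Nat.succ_mul_centralBinom_succ m
  have h' : ((m : ℝ) + 1) * (Nat.centralBinom (m + 1) : ℝ)
      = 2 * (2 * m + 1) * (Nat.centralBinom m : ℝ) := by exact_mod_cast h
  unfold bm
  field_simp
  linear_combination (2 * (4:ℝ) ^ m) * h'


lemma summable_pow_series {c : ℕ → ℝ} {q : ℕ → ℕ} (hc : ∀ m, |c m| ≤ 1)
    (hq : ∀ m, m ≤ q m) {x : ℝ} (hx : |x| < 1) :
    Summable (fun m => c m * x ^ q m) := by
  apply Summable.of_norm_bounded (g := fun m => |x| ^ m)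
    (summable_geometric_of_lt_one (abs_nonneg x) hx)
  intro m
  rw [norm_mul, norm_pow]
  calc ‖c m‖ * ‖x‖ ^ q m ≤ 1 * |x| ^ q m := by
        apply mul_le_mul_of_nonneg_right (hc m) (by positivity)
    _ = |x| ^ q m := one_mul _
    _ ≤ |x| ^ m := pow_le_pow_of_le_one (abs_nonneg x) hx.le (hq m)

lemma summable_bound_aux {r : ℝ} (hr0 : 0 < r) (hr1 : r < 1) :
    Summable (fun m : ℕ => (2 * (m : ℝ) + 2) * r ^ (m - 1)) := by
  rw [← summable_nat_add_iff 1]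
  have h1 : Summable (fun m : ℕ => (2 * ((m : ℝ) + 1) + 2) * r ^ m) := by
    have ha : Summable (fun m : ℕ => 2 * ((m : ℝ) * r ^ m)) :=
      (summable_pow_mul_geometric_of_norm_lt_one (R := ℝ) 1 (by
        rwa [Real.norm_eq_abs, abs_of_pos hr0])).mul_left 2 |>.congr (fun m => by ring)
    have hb : Summable (fun m : ℕ => 4 * r ^ m) :=
      (summable_geometric_of_lt_one hr0.le hr1).mul_left 4
    exact (ha.add hb).congr (fun m => by push_cast; ring)
  exact h1.congr (fun m => by push_cast; norm_num)

lemma summable_deriv_pow {c : ℕ → ℝ} {q : ℕ → ℕ} (hc : ∀ m, |c m| ≤ 1)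
    (hq : ∀ m, m ≤ q m) (hq2 : ∀ m, q m ≤ 2 * m + 2) {x : ℝ} (hx : |x| < 1) :
    Summable (fun m => c m * (q m : ℝ) * x ^ (q m - 1)) := by
  set r : ℝ := (|x| + 1) / 2 with hr
  have hr0 : 0 < r := by positivity
  have hxr : |x| ≤ r := by rw [hr]; linarith
  have hr1 : r < 1 := by rw [hr]; linarith
  apply Summable.of_norm_bounded (summable_bound_aux hr0 hr1)
  intro m
  rw [Real.norm_eq_abs, abs_mul, abs_mul, abs_pow]
  calc |c m| * |(q m : ℝ)| * |x| ^ (q m - 1)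
      ≤ 1 * (2 * (m:ℝ) + 2) * r ^ (q m - 1) := by
        apply mul_le_mul (mul_le_mul (hc m) ?_ (abs_nonneg _) zero_le_one)
          (pow_le_pow_left₀ (abs_nonneg x) hxr _) (by positivity) (by positivity)
        rw [abs_of_nonneg (by positivity)]
        exact_mod_cast (by exact_mod_cast hq2 m : ((q m : ℝ) ≤ 2 * m + 2))
    _ ≤ (2 * (m:ℝ) + 2) * r ^ (m - 1) := by
        rw [one_mul]
        apply mul_le_mul_of_nonneg_left _ (by positivity)
        apply pow_le_pow_of_le_one hr0.le hr1.le
        have := hq m; omega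

lemma hasDerivAt_tsum_pow {c : ℕ → ℝ} {q : ℕ → ℕ} (hc : ∀ m, |c m| ≤ 1)
    (hq : ∀ m, m ≤ q m) (hq2 : ∀ m, q m ≤ 2 * m + 2) {x : ℝ} (hx : |x| < 1) :
    HasDerivAt (fun y => ∑' m, c m * y ^ q m)
      (∑' m, c m * (q m) * x ^ (q m - 1)) x := by
  set r : ℝ := (|x| + 1) / 2 with hr
  have hr0 : 0 < r := by positivity
  have hxr : |x| < r := by rw [hr]; linarith
  have hr1 : r < 1 := by rw [hr]; linarith
  -- summable bound
  have hu : Summable (fun m : ℕ => (2 * (m : ℝ) + 2) * r ^ (m - 1)) :=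
    summable_bound_aux hr0 hr1
  have key := hasDerivAt_tsum_of_isPreconnected hu (isOpen_Ioo (a := -r) (b := r))
    (isPreconnected_Ioo)
    (g := fun m y => c m * y ^ q m)
    (g' := fun m y => c m * (q m) * y ^ (q m - 1))
    (fun m y _ => by
      simpa [mul_assoc] using (HasDerivAt.const_mul (c m) (hasDerivAt_pow (q m) y)))
    (fun m y hy => by
      have hyr : |y| ≤ r := by
        rw [abs_le]; exact ⟨(hy.1).le, (hy.2).le⟩
      rw [Real.norm_eq_abs, abs_mul, abs_mul, abs_pow]
      calc |c m| * |(q m : ℝ)| * |y| ^ (q m - 1)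
          ≤ 1 * (2 * (m:ℝ) + 2) * r ^ (q m - 1) := by
            apply mul_le_mul (mul_le_mul (hc m) ?_ (abs_nonneg _) zero_le_one)
              (pow_le_pow_left₀ (abs_nonneg y) hyr _) (by positivity) (by positivity)
            rw [abs_of_nonneg (by positivity)]
            exact_mod_cast (by exact_mod_cast hq2 m : ((q m : ℝ) ≤ 2 * m + 2))
        _ ≤ (2 * (m:ℝ) + 2) * r ^ (m - 1) := by
            rw [one_mul]
            apply mul_le_mul_of_nonneg_left _ (by positivity)
            apply pow_le_pow_of_le_one hr0.le hr1.le
            have := hq m; omega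
    )
    (show (0:ℝ) ∈ Set.Ioo (-r) r from ⟨by linarith, by linarith⟩)
    (by
      apply summable_of_ne_finset_zero (s := {0})
      intro m hm
      simp only [Finset.mem_singleton] at hm
      have : q m ≠ 0 := by have := hq m; omega
      simp [zero_pow this])
    (show x ∈ Set.Ioo (-r) r by rw [Set.mem_Ioo, ← abs_lt]; exact hxr)
  exact key




-- dup: noncomputable def bm (m : ℕ) : ℝ := (Nat.centralBinom m : ℝ) / 4 ^ m
lemma abs_bm_le_one (m : ℕ) : |bm m| ≤ 1 := by
  rw [abs_of_nonneg (bm_nonneg m)]; exact bm_le_one m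

noncomputable def f2 (x : ℝ) : ℝ := ∑' m, bm m * x ^ (2 * m)

lemma summable_f2 {x : ℝ} (hx : |x| < 1) : Summable (fun m => bm m * x ^ (2 * m)) :=
  summable_pow_series abs_bm_le_one (fun m => by omega) hx

lemma f2_zero : f2 0 = 1 := by
  rw [f2, tsum_eq_single 0 (fun m hm => by simp [Nat.mul_ne_zero, hm])]
  simp [bm_zero]

lemma f2_nonneg {x : ℝ} : 0 ≤ f2 x := by
  apply tsum_nonneg
  intro m
  have : 0 ≤ x ^ (2 * m) := by rw [pow_mul]; positivity
  exact mul_nonneg (bm_nonneg m) this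

lemma hasDerivAt_f2 {x : ℝ} (hx : |x| < 1) :
    HasDerivAt f2 (∑' m, bm m * (2 * m) * x ^ (2 * m - 1)) x := by
  have := hasDerivAt_tsum_pow (c := bm) (q := fun m => 2 * m) abs_bm_le_one
    (fun m => Nat.le_mul_of_pos_left m (by norm_num))
    (fun m => by show 2*m ≤ 2*m+2; omega) hx
  push_cast at this
  exact this

lemma summable_f2' {x : ℝ} (hx : |x| < 1) :
    Summable (fun m : ℕ => bm m * (2 * (m:ℝ)) * x ^ (2 * m - 1)) := by
  have := summable_deriv_pow (q := fun m => 2 * m) abs_bm_le_one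
    (fun m => Nat.le_mul_of_pos_left m (by norm_num)) (fun m => by show 2*m ≤ 2*m+2; omega) hx
  apply this.congr
  intro m
  push_cast
  ring

/-- the ODE `(1 - x²) f2' = x f2` -/
lemma f2_ode {x : ℝ} (hx : |x| < 1) :
    (1 - x ^ 2) * (∑' m : ℕ, bm m * (2 * (m:ℝ)) * x ^ (2 * m - 1)) = x * f2 x := by
  set D := ∑' m : ℕ, bm m * (2 * (m:ℝ)) * x ^ (2 * m - 1) with hD
  have hDs := summable_f2' hx
  -- reindex D
  have hshift : Summable (fun m : ℕ => bm (m+1) * (2 * ((m:ℝ)+1)) * x ^ (2*(m+1) - 1)) := by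
    have := (summable_nat_add_iff 1).mpr hDs
    apply this.congr
    intro m
    push_cast
    ring
  have hD1 : D = ∑' m : ℕ, (2 * (m:ℝ) + 1) * bm m * x ^ (2 * m + 1) := by
    rw [hD, hDs.tsum_eq_zero_add]
    have h0 : bm 0 * (2 * ((0:ℕ):ℝ)) * x ^ (2 * 0 - 1) = 0 := by norm_num
    rw [h0, zero_add]
    apply tsum_congr
    intro m
    have h1 : 2 * (m + 1) - 1 = 2 * m + 1 := by omega
    rw [h1]
    push_cast
    linear_combination x ^ (2*m+1) * (bm_rec m)
  have hS1 : Summable (fun m : ℕ => (2 * (m:ℝ) + 1) * bm m * x ^ (2 * m + 1)) := by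
    apply hshift.congr
    intro m
    have h1 : 2 * (m + 1) - 1 = 2 * m + 1 := by omega
    rw [h1]
    push_cast
    linear_combination x ^ (2*m+1) * (bm_rec m)
  -- x^2 * D term by term
  have hD2 : x ^ 2 * D = ∑' m : ℕ, 2 * (m:ℝ) * bm m * x ^ (2 * m + 1) := by
    rw [hD, ← tsum_mul_left]
    apply tsum_congr
    intro m
    cases m with
    | zero => simp
    | succ n =>
      have h1 : 2 * (n + 1) - 1 = 2 * n + 1 := by omega
      rw [h1]
      have : x ^ 2 * x ^ (2 * n + 1) = x ^ (2 * (n+1) + 1) := by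
        rw [← pow_add]; congr 1; omega
      push_cast
      linear_combination (2 * ((n:ℝ)+1) * bm (n+1)) * this
  have hS2 : Summable (fun m : ℕ => 2 * (m:ℝ) * bm m * x ^ (2 * m + 1)) := by
    have := hDs.mul_left (x ^ 2)
    apply this.congr
    intro m
    cases m with
    | zero => simp
    | succ n =>
      have h1 : 2 * (n + 1) - 1 = 2 * n + 1 := by omega
      rw [h1]
      have : x ^ 2 * x ^ (2 * n + 1) = x ^ (2 * (n+1) + 1) := by
        rw [← pow_add]; congr 1; omega
      push_cast
      linear_combination (2 * ((n:ℝ)+1) * bm (n+1)) * this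
  have expand : (1 - x ^ 2) * D = D - x ^ 2 * D := by ring
  rw [expand, hD2, hD1, ← hS1.tsum_sub hS2]
  have : x * f2 x = ∑' m : ℕ, x * (bm m * x ^ (2*m)) := by
    rw [f2, tsum_mul_left]
  rw [this]
  apply tsum_congr
  intro m
  have hxp : x * x ^ (2*m) = x ^ (2*m+1) := by rw [mul_comm, ← pow_succ]
  calc (2 * (m:ℝ) + 1) * bm m * x ^ (2 * m + 1) - 2 * (m:ℝ) * bm m * x ^ (2 * m + 1)
      = bm m * x ^ (2*m+1) := by ring
    _ = x * (bm m * x ^ (2*m)) := by rw [← hxp]; ring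

/-- the closed form -/
lemma f2_eq {x : ℝ} (hx : |x| < 1) : f2 x = 1 / Real.sqrt (1 - x ^ 2) := by
  -- q := f2² (1 - x²) is constant = 1 on Ioo (-1) 1
  have key : ∀ y ∈ Set.Ioo (-1:ℝ) 1, f2 y ^ 2 * (1 - y ^ 2) = 1 := by
    have hwhole : ∀ y ∈ Set.Ioo (-1:ℝ) 1,
        HasDerivAt (fun z => f2 z ^ 2 * (1 - z ^ 2)) 0 y := by
      intro y hy
      have hy' : |y| < 1 := abs_lt.mpr ⟨hy.1, hy.2⟩
      have h1 := hasDerivAt_f2 hy'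
      set D := ∑' m : ℕ, bm m * (2 * (m:ℝ)) * y ^ (2 * m - 1) with hD
      have h2 : HasDerivAt (fun z => f2 z ^ 2 * (1 - z ^ 2))
          (2 * f2 y * D * (1 - y^2) + f2 y ^ 2 * (-(2*y))) y := by
        have ha : HasDerivAt (fun z => f2 z ^ 2) (2 * f2 y * D) y := by
          have := h1.pow 2
          norm_num at this
          exact this
        have hb : HasDerivAt (fun z : ℝ => 1 - z ^ 2) (-(2*y)) y := by
          simpa using ((hasDerivAt_pow 2 y).const_sub 1)
        exact ha.mul hb
      have hode := f2_ode hy'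
      have : 2 * f2 y * D * (1 - y^2) + f2 y ^ 2 * (-(2*y)) = 0 := by
        have h3 : (1 - y^2) * D = y * f2 y := hode
        linear_combination (2 * f2 y) * h3
      rwa [this] at h2
    intro y hy
    -- connect y to 0 by constancy
    have const : ∀ z ∈ Set.Ioo (-1:ℝ) 1, f2 z ^ 2 * (1 - z ^ 2) = f2 0 ^ 2 * (1 - (0:ℝ) ^ 2) := by
      intro z hz
      rcases le_or_gt 0 z with h0 | h0
      · have := constant_of_has_deriv_right_zero (f := fun w => f2 w ^ 2 * (1 - w ^ 2))
          (a := 0) (b := z) ?_ ?_ z (Set.right_mem_Icc.mpr h0)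
        · exact this
        · intro w hw
          have hw' : w ∈ Set.Ioo (-1:ℝ) 1 := ⟨by linarith [hw.1], lt_of_le_of_lt hw.2 hz.2⟩
          exact (hwhole w hw').continuousAt.continuousWithinAt
        · intro w hw
          have hw' : w ∈ Set.Ioo (-1:ℝ) 1 := ⟨by linarith [hw.1], lt_trans hw.2 hz.2⟩
          exact (hwhole w hw').hasDerivWithinAt
      · have := constant_of_has_deriv_right_zero (f := fun w => f2 w ^ 2 * (1 - w ^ 2))
          (a := z) (b := 0) ?_ ?_ 0 (Set.right_mem_Icc.mpr h0.le)
        · simpa using this.symm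
        · intro w hw
          have hw' : w ∈ Set.Ioo (-1:ℝ) 1 := ⟨lt_of_lt_of_le hz.1 hw.1, by linarith [hw.2]⟩
          exact (hwhole w hw').continuousAt.continuousWithinAt
        · intro w hw
          have hw' : w ∈ Set.Ioo (-1:ℝ) 1 := ⟨lt_of_lt_of_le hz.1 hw.1, by linarith [hw.2]⟩
          exact (hwhole w hw').hasDerivWithinAt
    rw [const y hy, f2_zero]; norm_num
  have hx' : x ∈ Set.Ioo (-1:ℝ) 1 := ⟨(abs_lt.mp hx).1, (abs_lt.mp hx).2⟩
  have h := key x hx'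
  have hpos : (0:ℝ) < 1 - x ^ 2 := by nlinarith [abs_lt.mp hx, sq_abs x]
  have hf2sq : f2 x ^ 2 = 1 / (1 - x ^ 2) := by
    field_simp at h ⊢
    linarith [h]
  have : f2 x = Real.sqrt (f2 x ^ 2) := (Real.sqrt_sq f2_nonneg).symm
  rw [this, hf2sq, one_div, Real.sqrt_inv, one_div]



-- dup removed: noncomputable def bm (m : ℕ) : ℝ := (Nat.centralBinom m : ℝ) / 4 ^ m
-- dup removed: noncomputable def f2 (x : ℝ) : ℝ := ∑' m, bm m * x ^ (2 * m)
/-- coefficients of arcsin -/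
noncomputable def am (m : ℕ) : ℝ := bm m / (2 * m + 1)

lemma abs_am_le_one (m : ℕ) : |am m| ≤ 1 := by
  rw [am, abs_div, abs_of_nonneg (by positivity : (0:ℝ) ≤ 2 * (m:ℝ) + 1)]
  calc |bm m| / (2 * (m:ℝ) + 1) ≤ 1 / 1 := by
        apply div_le_div₀ (by norm_num) (abs_bm_le_one m) one_pos (by linarith [Nat.cast_nonneg (α := ℝ) m])
    _ = 1 := by norm_num

noncomputable def f1 (x : ℝ) : ℝ := ∑' m, am m * x ^ (2 * m + 1)

lemma f1_zero : f1 0 = 0 := by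
  rw [f1]
  convert tsum_zero with m
  simp

lemma hasDerivAt_f1 {x : ℝ} (hx : |x| < 1) : HasDerivAt f1 (f2 x) x := by
  have h := hasDerivAt_tsum_pow (c := am) (q := fun m => 2 * m + 1) abs_am_le_one
    (fun m => by show m ≤ 2*m+1; omega) (fun m => by show 2*m+1 ≤ 2*m+2; omega) hx
  have e : (∑' m, am m * ((2 * m + 1 : ℕ) : ℝ) * x ^ (2 * m + 1 - 1)) = f2 x := by
    rw [f2]
    apply tsum_congr
    intro m
    have h1 : 2 * m + 1 - 1 = 2 * m := by omega
    rw [h1, am]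
    have : (2 * (m:ℝ) + 1) ≠ 0 := by positivity
    push_cast
    field_simp
  rw [← e]
  exact h

lemma f1_eq_arcsin {x : ℝ} (hx : |x| < 1) : f1 x = Real.arcsin x := by
  have key : ∀ y ∈ Set.Ioo (-1:ℝ) 1, HasDerivAt (fun z => f1 z - Real.arcsin z) 0 y := by
    intro y hy
    have hy' : |y| < 1 := abs_lt.mpr ⟨hy.1, hy.2⟩
    have h1 := hasDerivAt_f1 hy'
    have h2 : HasDerivAt Real.arcsin (1 / Real.sqrt (1 - y ^ 2)) y :=
      Real.hasDerivAt_arcsin (by linarith [hy.1]) (by linarith [hy.2])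
    have := h1.sub h2
    rwa [f2_eq hy', sub_self] at this
  have hx' : x ∈ Set.Ioo (-1:ℝ) 1 := ⟨(abs_lt.mp hx).1, (abs_lt.mp hx).2⟩
  have const : f1 x - Real.arcsin x = f1 0 - Real.arcsin 0 := by
    rcases le_or_gt 0 x with h0 | h0
    · exact constant_of_has_deriv_right_zero
        (fun w hw => (key w ⟨by linarith [hw.1], lt_of_le_of_lt hw.2 hx'.2⟩).continuousAt.continuousWithinAt)
        (fun w hw => (key w ⟨by linarith [hw.1], lt_trans hw.2 hx'.2⟩).hasDerivWithinAt)
        x (Set.right_mem_Icc.mpr h0)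
    · have := constant_of_has_deriv_right_zero
        (f := fun z => f1 z - Real.arcsin z) (a := x) (b := 0)
        (fun w hw => (key w ⟨lt_of_lt_of_le hx'.1 hw.1, by linarith [hw.2]⟩).continuousAt.continuousWithinAt)
        (fun w hw => (key w ⟨lt_of_lt_of_le hx'.1 hw.1, by linarith [hw.2]⟩).hasDerivWithinAt)
        0 (Set.right_mem_Icc.mpr h0.le)
      simpa using this.symm
  rw [f1_zero, Real.arcsin_zero, sub_zero] at const
  linarith [const]



-- dup removed: noncomputable def bm (m : ℕ) : ℝ := (Nat.centralBinom m : ℝ) / 4 ^ m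
-- dup removed: noncomputable def am (m : ℕ) : ℝ := bm m / (2 * m + 1)
-- dup removed: noncomputable def f1 (x : ℝ) : ℝ := ∑' m, am m * x ^ (2 * m + 1)
/-- a reusable constancy lemma on (-1,1) -/
lemma const_on_Ioo {f : ℝ → ℝ} (h : ∀ y ∈ Set.Ioo (-1:ℝ) 1, HasDerivAt f 0 y)
    {x : ℝ} (hx : |x| < 1) : f x = f 0 := by
  have hx' : x ∈ Set.Ioo (-1:ℝ) 1 := ⟨(abs_lt.mp hx).1, (abs_lt.mp hx).2⟩
  rcases le_or_gt 0 x with h0 | h0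
  · exact constant_of_has_deriv_right_zero
      (fun w hw => (h w ⟨by linarith [hw.1], lt_of_le_of_lt hw.2 hx'.2⟩).continuousAt.continuousWithinAt)
      (fun w hw => (h w ⟨by linarith [hw.1], lt_trans hw.2 hx'.2⟩).hasDerivWithinAt)
      x (Set.right_mem_Icc.mpr h0)
  · have := constant_of_has_deriv_right_zero (f := f) (a := x) (b := 0)
      (fun w hw => (h w ⟨lt_of_lt_of_le hx'.1 hw.1, by linarith [hw.2]⟩).continuousAt.continuousWithinAt)
      (fun w hw => (h w ⟨lt_of_lt_of_le hx'.1 hw.1, by linarith [hw.2]⟩).hasDerivWithinAt)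
      0 (Set.right_mem_Icc.mpr h0.le)
    simpa using this.symm

/-- coefficients of the hRelu series -/
noncomputable def em (m : ℕ) : ℝ := bm m / ((2 * m + 1) * (2 * m + 2))

lemma em_nonneg (m : ℕ) : 0 ≤ em m := by
  rw [em]
  apply div_nonneg (bm_nonneg m) (by positivity)

lemma em_le (m : ℕ) : em m ≤ 1 / (((m:ℝ) + 1) * ((m:ℝ) + 2)) := by
  rw [em]
  apply div_le_div₀ (by positivity) (bm_le_one m) (by positivity)
  nlinarith [Nat.cast_nonneg (α := ℝ) m]

lemma abs_em_le_one (m : ℕ) : |em m| ≤ 1 := by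
  rw [abs_of_nonneg (em_nonneg m)]
  calc em m ≤ 1 / (((m:ℝ) + 1) * ((m:ℝ) + 2)) := em_le m
    _ ≤ 1 := by
      rw [div_le_one (by positivity)]
      nlinarith [Nat.cast_nonneg (α := ℝ) m]

lemma summable_em : Summable em := by
  apply summable_of_sum_range_le (c := 1) (fun m => em_nonneg m)
  intro n
  calc ∑ i ∈ range n, em i ≤ ∑ i ∈ range n, (1 / ((i:ℝ) + 1) - 1 / ((i:ℝ) + 2)) := by
        apply Finset.sum_le_sum
        intro i _
        calc em i ≤ 1 / (((i:ℝ) + 1) * ((i:ℝ) + 2)) := em_le i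
          _ = 1 / ((i:ℝ) + 1) - 1 / ((i:ℝ) + 2) := by
            rw [div_sub_div _ _ (by positivity) (by positivity)]
            ring_nf
    _ = 1 / ((0:ℝ) + 1) - 1 / ((n:ℝ) + 1) := by
        have := Finset.sum_range_sub' (f := fun i : ℕ => 1 / ((i:ℝ) + 1)) n
        simp only [push_cast] at this ⊢
        convert this using 2 <;> push_cast <;> ring_nf
    _ ≤ 1 := by
        norm_num
        positivity
  
lemma tsum_em_le : ∑' m, em m ≤ 1 := by
  apply Real.tsum_le_of_sum_range_le (fun m => em_nonneg m)
  intro n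
  calc ∑ i ∈ range n, em i ≤ ∑ i ∈ range n, (1 / ((i:ℝ) + 1) - 1 / ((i:ℝ) + 2)) := by
        apply Finset.sum_le_sum
        intro i _
        calc em i ≤ 1 / (((i:ℝ) + 1) * ((i:ℝ) + 2)) := em_le i
          _ = 1 / ((i:ℝ) + 1) - 1 / ((i:ℝ) + 2) := by
            rw [div_sub_div _ _ (by positivity) (by positivity)]
            ring_nf
    _ = 1 / ((0:ℝ) + 1) - 1 / ((n:ℝ) + 1) := by
        have := Finset.sum_range_sub' (f := fun i : ℕ => 1 / ((i:ℝ) + 1)) n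
        simp only [push_cast] at this ⊢
        convert this using 2 <;> push_cast <;> ring_nf
    _ ≤ 1 := by
        norm_num
        positivity

noncomputable def f0 (x : ℝ) : ℝ := ∑' m, em m * x ^ (2 * m + 2)

lemma summable_f0 {x : ℝ} (hx : |x| < 1) : Summable (fun m => em m * x ^ (2 * m + 2)) :=
  summable_pow_series abs_em_le_one (fun m => by omega) hx

lemma f0_zero : f0 0 = 0 := by
  rw [f0]
  convert tsum_zero with m
  simp

lemma hasDerivAt_f0 {x : ℝ} (hx : |x| < 1) : HasDerivAt f0 (f1 x) x := by
  have h := hasDerivAt_tsum_pow (c := em) (q := fun m => 2 * m + 2) abs_em_le_one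
    (fun m => by show m ≤ 2*m+2; omega) (fun m => le_refl _) hx
  have e : (∑' m, em m * ((2 * m + 2 : ℕ) : ℝ) * x ^ (2 * m + 2 - 1)) = f1 x := by
    rw [f1]
    apply tsum_congr
    intro m
    have h1 : 2 * m + 2 - 1 = 2 * m + 1 := by omega
    rw [h1, em, am]
    have h2 : (2 * (m:ℝ) + 1) ≠ 0 := by positivity
    have h3 : (2 * (m:ℝ) + 2) ≠ 0 := by positivity
    push_cast
    field_simp
  rw [← e]
  exact h

/-- the key series identity for hRelu -/
lemma hRelu_series {x : ℝ} (hx : |x| < 1) :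
    hRelu x = (1 + (π / 2) * x + f0 x) / (2 * π) := by
  have sqrt_ne : Real.sqrt (1 - x ^ 2) ≠ 0 := by
    apply ne_of_gt
    apply Real.sqrt_pos.mpr
    nlinarith [abs_lt.mp hx, sq_abs x]
  have key : ∀ y ∈ Set.Ioo (-1:ℝ) 1,
      HasDerivAt (fun z => Real.sqrt (1 - z ^ 2) + z * Real.arcsin z - 1 - f0 z) 0 y := by
    intro y hy
    have hy' : |y| < 1 := abs_lt.mpr ⟨hy.1, hy.2⟩
    have hpos : (0:ℝ) < 1 - y ^ 2 := by nlinarith [abs_lt.mp hy', sq_abs y]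
    have hsq : Real.sqrt (1 - y ^ 2) ≠ 0 := ne_of_gt (Real.sqrt_pos.mpr hpos)
    have h1 : HasDerivAt (fun z : ℝ => Real.sqrt (1 - z ^ 2))
        (-y / Real.sqrt (1 - y ^ 2)) y := by
      have hu : HasDerivAt (fun z : ℝ => 1 - z ^ 2) (-(2*y)) y := by
        simpa using ((hasDerivAt_pow 2 y).const_sub 1)
      have := (Real.hasDerivAt_sqrt (ne_of_gt hpos)).comp y hu
      refine this.congr_deriv ?_
      field_simp
    have h2 : HasDerivAt (fun z : ℝ => z * Real.arcsin z)
        (Real.arcsin y + y * (1 / Real.sqrt (1 - y ^ 2))) y := by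
      have := (hasDerivAt_id y).mul
        (Real.hasDerivAt_arcsin (by linarith [hy.1]) (by linarith [hy.2]))
      refine this.congr_deriv ?_
      simp [id_eq]
    have h3 : HasDerivAt f0 (f1 y) y := hasDerivAt_f0 hy'
    have := (h1.add h2).sub_const 1 |>.sub h3
    rw [f1_eq_arcsin hy'] at this
    have hval : -y / Real.sqrt (1 - y^2) + (Real.arcsin y + y * (1 / Real.sqrt (1 - y^2)))
        - Real.arcsin y = 0 := by
      field_simp
      ring
    rwa [hval] at this
  have hconst := const_on_Ioo key hx
  have h0 : Real.sqrt (1 - (0:ℝ) ^ 2) + 0 * Real.arcsin 0 - 1 - f0 0 = 0 := by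
    rw [f0_zero]
    norm_num
  rw [h0] at hconst
  -- so sqrt(1-x²) + x arcsin x = 1 + f0 x
  have hid : Real.sqrt (1 - x ^ 2) + x * Real.arcsin x = 1 + f0 x := by linarith [hconst]
  rw [hRelu]
  have harccos : Real.arccos x = π / 2 - Real.arcsin x := Real.arccos_eq_pi_div_two_sub_arcsin x
  rw [harccos]
  have : x * (π - (π / 2 - Real.arcsin x)) = (π/2) * x + x * Real.arcsin x := by ring
  rw [this]
  rw [show Real.sqrt (1 - x ^ 2) + (π / 2 * x + x * Real.arcsin x)
      = (Real.sqrt (1 - x ^ 2) + x * Real.arcsin x) + π / 2 * x by ring, hid]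
  ring




/-- alternating binomial sums kill monomials of degree < d -/
lemma alt_choose_pow_zero : ∀ (d j : ℕ), j < d →
    ∑ k ∈ range (d+1), (-1:ℝ)^k * (d.choose k : ℝ) * (k:ℝ)^j = 0 := by
  intro d
  induction d with
  | zero => intro j hj; omega
  | succ d IH =>
    intro j hj
    have pascal : ∀ k, (((d+1).choose (k+1) : ℕ) : ℝ)
        = (d.choose k : ℝ) + (d.choose (k+1) : ℝ) := by
      intro k
      rw [Nat.choose_succ_succ]
      push_cast
      ring
    have step1 : ∑ k ∈ range (d+1+1), (-1:ℝ)^k * ((d+1).choose k : ℝ) * (k:ℝ)^j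
        = (∑ k ∈ range (d+1), (-1:ℝ)^(k+1) * ((d+1).choose (k+1) : ℝ) * ((k:ℝ)+1)^j)
          + (0:ℝ)^j := by
      rw [Finset.sum_range_succ' (fun k => (-1:ℝ)^k * ((d+1).choose k : ℝ) * (k:ℝ)^j) (d+1)]
      push_cast
      norm_num
    have step2 : (∑ k ∈ range (d+1), (-1:ℝ)^(k+1) * ((d+1).choose (k+1) : ℝ) * ((k:ℝ)+1)^j)
        = -(∑ k ∈ range (d+1), (-1:ℝ)^k * (d.choose k : ℝ) * ((k:ℝ)+1)^j)
          - (∑ k ∈ range (d+1), (-1:ℝ)^k * (d.choose (k+1) : ℝ) * ((k:ℝ)+1)^j) := by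
      have e1 : (∑ k ∈ range (d+1), (-1:ℝ)^(k+1) * ((d+1).choose (k+1) : ℝ) * ((k:ℝ)+1)^j)
          = ∑ k ∈ range (d+1), (-((-1:ℝ)^k * (d.choose k : ℝ) * ((k:ℝ)+1)^j)
              + -((-1:ℝ)^k * (d.choose (k+1) : ℝ) * ((k:ℝ)+1)^j)) :=
        Finset.sum_congr rfl (fun k _ => by rw [pascal k]; ring)
      rw [e1, Finset.sum_add_distrib]
      rw [Finset.sum_neg_distrib, Finset.sum_neg_distrib]
      ring
    have hQ : (∑ k ∈ range (d+1), (-1:ℝ)^k * (d.choose (k+1) : ℝ) * ((k:ℝ)+1)^j)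
        = (0:ℝ)^j - ∑ k ∈ range (d+1), (-1:ℝ)^k * (d.choose k : ℝ) * (k:ℝ)^j := by
      have hR1 : (∑ k ∈ range (d+2), (-1:ℝ)^k * (d.choose k : ℝ) * (k:ℝ)^j)
          = ∑ k ∈ range (d+1), (-1:ℝ)^k * (d.choose k : ℝ) * (k:ℝ)^j := by
        rw [Finset.sum_range_succ]
        simp [Nat.choose_succ_self]
      have hR2 : (∑ k ∈ range (d+2), (-1:ℝ)^k * (d.choose k : ℝ) * (k:ℝ)^j)
          = (∑ k ∈ range (d+1), (-1:ℝ)^(k+1) * (d.choose (k+1) : ℝ) * ((k:ℝ)+1)^j)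
            + (0:ℝ)^j := by
        rw [Finset.sum_range_succ' (fun k => (-1:ℝ)^k * (d.choose k : ℝ) * (k:ℝ)^j) (d+1)]
        push_cast
        norm_num
      have e2 : (∑ k ∈ range (d+1), (-1:ℝ)^(k+1) * (d.choose (k+1) : ℝ) * ((k:ℝ)+1)^j)
          = -(∑ k ∈ range (d+1), (-1:ℝ)^k * (d.choose (k+1) : ℝ) * ((k:ℝ)+1)^j) := by
        rw [← Finset.sum_neg_distrib]
        exact Finset.sum_congr rfl (fun k _ => by ring)
      rw [e2, hR1] at hR2
      linarith [hR2]
    have hP : (∑ k ∈ range (d+1), (-1:ℝ)^k * (d.choose k : ℝ) * ((k:ℝ)+1)^j)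
        = ∑ i ∈ range (j+1), (j.choose i : ℝ)
            * (∑ k ∈ range (d+1), (-1:ℝ)^k * (d.choose k : ℝ) * (k:ℝ)^i) := by
      have expand : ∀ k : ℕ, ((k:ℝ)+1)^j = ∑ i ∈ range (j+1), (k:ℝ)^i * (j.choose i : ℝ) := by
        intro k
        have := add_pow (R := ℝ) (k:ℝ) 1 j
        simp only [one_pow, mul_one] at this
        rw [this]
      calc (∑ k ∈ range (d+1), (-1:ℝ)^k * (d.choose k : ℝ) * ((k:ℝ)+1)^j)
          = ∑ k ∈ range (d+1), ∑ i ∈ range (j+1),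
              (j.choose i : ℝ) * ((-1:ℝ)^k * (d.choose k : ℝ) * (k:ℝ)^i) := by
            apply Finset.sum_congr rfl
            intro k _
            rw [expand k, Finset.mul_sum]
            exact Finset.sum_congr rfl (fun i _ => by ring)
        _ = _ := by
            rw [Finset.sum_comm]
            exact Finset.sum_congr rfl (fun i _ => by rw [← Finset.mul_sum])
    rw [step1, step2, hP, hQ]
    rcases Nat.lt_or_ge j d with hjd | hjd
    · rw [IH j hjd]
      rw [Finset.sum_eq_zero, ]
      · ring
      · intro i hi
        rw [IH i (by simp at hi; omega), mul_zero]
    · have hjd' : j = d := by omega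
      subst hjd'
      rw [Finset.sum_eq_single j (fun i hi hne => by
            rw [IH i (by simp at hi; omega), mul_zero])
          (fun h => by simp at h)]
      rw [Nat.choose_self]
      push_cast
      ring




/-- the basic quantity V -/
noncomputable def V (d : ℕ) : ℝ := ∑ k ∈ range (d+1), (d.choose k : ℝ) * |1 - 2*(k:ℝ)/d|^d

lemma V_nonneg (d : ℕ) : 0 ≤ V d := by
  apply Finset.sum_nonneg
  intro k _
  positivity

lemma abs_y_le_one {d k : ℕ} (hd : 1 ≤ d) (hk : k ≤ d) : |1 - 2*(k:ℝ)/d| ≤ 1 := by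
  have hd0 : (0:ℝ) < d := by exact_mod_cast hd
  have h1 : (k:ℝ)/d ≤ 1 := by
    rw [div_le_one hd0]
    exact_mod_cast hk
  have h2 : (0:ℝ) ≤ (k:ℝ)/d := by positivity
  rw [abs_le]
  constructor
  · rw [mul_div_assoc] at *
    linarith
  · rw [mul_div_assoc]
    linarith

lemma U_zero (d j : ℕ) (hd : 1 ≤ d) (hj : j < d) :
    ∑ k ∈ range (d+1), (-1:ℝ)^k * (d.choose k : ℝ) * (1 - 2*(k:ℝ)/d)^j = 0 := by
  have expand : ∀ k : ℕ, (1 - 2*(k:ℝ)/d)^j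
      = ∑ i ∈ range (j+1), ((-2/(d:ℝ))^i * (j.choose i : ℝ)) * (k:ℝ)^i := by
    intro k
    have h0 : (1 - 2*(k:ℝ)/d) = (-2/(d:ℝ)) * (k:ℝ) + 1 := by ring
    rw [h0, add_pow]
    apply Finset.sum_congr rfl
    intro i _
    rw [mul_pow]
    ring
  calc ∑ k ∈ range (d+1), (-1:ℝ)^k * (d.choose k : ℝ) * (1 - 2*(k:ℝ)/d)^j
      = ∑ k ∈ range (d+1), ∑ i ∈ range (j+1),
          ((-2/(d:ℝ))^i * (j.choose i : ℝ)) * ((-1:ℝ)^k * (d.choose k : ℝ) * (k:ℝ)^i) := by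
        apply Finset.sum_congr rfl
        intro k _
        rw [expand k, Finset.mul_sum]
        exact Finset.sum_congr rfl (fun i _ => by ring)
    _ = ∑ i ∈ range (j+1), ((-2/(d:ℝ))^i * (j.choose i : ℝ))
          * (∑ k ∈ range (d+1), (-1:ℝ)^k * (d.choose k : ℝ) * (k:ℝ)^i) := by
        rw [Finset.sum_comm]
        exact Finset.sum_congr rfl (fun i _ => by rw [← Finset.mul_sum])
    _ = 0 := by
        apply Finset.sum_eq_zero
        intro i hi
        rw [alt_choose_pow_zero d i (by simp at hi; omega), mul_zero]

lemma U_le (d j : ℕ) (hd : 1 ≤ d) :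
    |∑ k ∈ range (d+1), (-1:ℝ)^k * (d.choose k : ℝ) * (1 - 2*(k:ℝ)/d)^j| ≤ V d := by
  rcases Nat.lt_or_ge j d with hj | hj
  · rw [U_zero d j hd hj, abs_zero]
    exact V_nonneg d
  · calc |∑ k ∈ range (d+1), (-1:ℝ)^k * (d.choose k : ℝ) * (1 - 2*(k:ℝ)/d)^j|
        ≤ ∑ k ∈ range (d+1), |(-1:ℝ)^k * (d.choose k : ℝ) * (1 - 2*(k:ℝ)/d)^j| :=
          Finset.abs_sum_le_sum_abs _ _
      _ ≤ V d := by
          apply Finset.sum_le_sum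
          intro k hk
          rw [abs_mul, abs_mul, abs_pow, abs_pow, abs_neg, abs_one, one_pow, one_mul,
            Nat.abs_cast]
          apply mul_le_mul_of_nonneg_left _ (by positivity)
          exact pow_le_pow_of_le_one (abs_nonneg _)
            (abs_y_le_one hd (by simp at hk; omega)) hj

/-- the T_n bound -/
lemma Tn_le (d n : ℕ) (hd : 1 ≤ d) (α β : ℝ) :
    |∑ k ∈ range (d+1), (-1:ℝ)^k * (d.choose k : ℝ) * ((1 - 2*(k:ℝ)/d)*α + β)^n|
      ≤ (|α|+|β|)^n * V d := by
  have expand : ∀ k : ℕ, ((1 - 2*(k:ℝ)/d)*α + β)^n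
      = ∑ j ∈ range (n+1), (α^j * β^(n-j) * (n.choose j : ℝ)) * (1 - 2*(k:ℝ)/d)^j := by
    intro k
    rw [add_pow]
    apply Finset.sum_congr rfl
    intro j _
    rw [mul_pow]
    ring
  have swap : ∑ k ∈ range (d+1), (-1:ℝ)^k * (d.choose k : ℝ) * ((1 - 2*(k:ℝ)/d)*α + β)^n
      = ∑ j ∈ range (n+1), (α^j * β^(n-j) * (n.choose j : ℝ))
          * (∑ k ∈ range (d+1), (-1:ℝ)^k * (d.choose k : ℝ) * (1 - 2*(k:ℝ)/d)^j) := by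
    calc ∑ k ∈ range (d+1), (-1:ℝ)^k * (d.choose k : ℝ) * ((1 - 2*(k:ℝ)/d)*α + β)^n
        = ∑ k ∈ range (d+1), ∑ j ∈ range (n+1),
            (α^j * β^(n-j) * (n.choose j : ℝ)) * ((-1:ℝ)^k * (d.choose k : ℝ) * (1 - 2*(k:ℝ)/d)^j) := by
          apply Finset.sum_congr rfl
          intro k _
          rw [expand k, Finset.mul_sum]
          exact Finset.sum_congr rfl (fun j _ => by ring)
      _ = _ := by
          rw [Finset.sum_comm]
          exact Finset.sum_congr rfl (fun j _ => by rw [← Finset.mul_sum])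
  rw [swap]
  calc |∑ j ∈ range (n+1), (α^j * β^(n-j) * (n.choose j : ℝ))
          * (∑ k ∈ range (d+1), (-1:ℝ)^k * (d.choose k : ℝ) * (1 - 2*(k:ℝ)/d)^j)|
      ≤ ∑ j ∈ range (n+1), |α^j * β^(n-j) * (n.choose j : ℝ)|
          * |∑ k ∈ range (d+1), (-1:ℝ)^k * (d.choose k : ℝ) * (1 - 2*(k:ℝ)/d)^j| := by
        refine le_trans (Finset.abs_sum_le_sum_abs _ _) ?_
        apply Finset.sum_le_sum
        intro j _
        rw [abs_mul]
    _ ≤ ∑ j ∈ range (n+1), (|α|^j * |β|^(n-j) * (n.choose j : ℝ)) * V d := by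
        apply Finset.sum_le_sum
        intro j _
        rw [abs_mul, abs_mul, abs_pow, abs_pow, Nat.abs_cast]
        exact mul_le_mul_of_nonneg_left (U_le d j hd) (by positivity)
    _ = (|α|+|β|)^n * V d := by
        rw [← Finset.sum_mul, add_pow]
  
/-- exponential bound on V -/
lemma V_le (d : ℕ) (hd : 1 ≤ d) :
    V d ≤ 2 * Real.exp (-(d:ℝ)) * (Real.exp 1 + Real.exp (-1))^d := by
  have hd0 : (0:ℝ) < d := by exact_mod_cast hd
  have point : ∀ k ∈ range (d+1), (d.choose k : ℝ) * |1 - 2*(k:ℝ)/d|^d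
      ≤ ((d.choose k : ℝ) * (Real.exp ((d:ℝ) - 2*k) + Real.exp (-((d:ℝ) - 2*k))))
        * Real.exp (-(d:ℝ)) := by
    intro k _
    set y := 1 - 2*(k:ℝ)/d with hy
    have hdy : (d:ℝ) * y = (d:ℝ) - 2*k := by
      rw [hy]; field_simp
    have h1 : |y| ≤ Real.exp (|y| - 1) := by
      have := Real.add_one_le_exp (|y| - 1)
      linarith
    have h2 : |y|^d ≤ Real.exp (|y| - 1)^d := pow_le_pow_left₀ (abs_nonneg _) h1 d
    have h3 : Real.exp (|y| - 1)^d = Real.exp ((d:ℝ) * |y|) * Real.exp (-(d:ℝ)) := by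
      rw [← Real.exp_nat_mul, ← Real.exp_add]
      congr 1
      ring
    have h4 : Real.exp ((d:ℝ) * |y|) ≤ Real.exp ((d:ℝ) * y) + Real.exp (-((d:ℝ) * y)) := by
      rcases abs_cases y with ⟨he, _⟩ | ⟨he, _⟩
      · rw [he]
        nlinarith [Real.exp_pos (-((d:ℝ) * y))]
      · rw [he, mul_neg]
        nlinarith [Real.exp_pos ((d:ℝ) * y)]
    have h5 : |y|^d ≤ (Real.exp ((d:ℝ) - 2*k) + Real.exp (-((d:ℝ) - 2*k))) * Real.exp (-(d:ℝ)) := by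
      rw [← hdy]
      calc |y|^d ≤ Real.exp ((d:ℝ) * |y|) * Real.exp (-(d:ℝ)) := by rw [← h3]; exact h2
        _ ≤ (Real.exp ((d:ℝ) * y) + Real.exp (-((d:ℝ) * y))) * Real.exp (-(d:ℝ)) := by
            exact mul_le_mul_of_nonneg_right h4 (Real.exp_pos _).le
    calc (d.choose k : ℝ) * |y|^d
        ≤ (d.choose k : ℝ) * ((Real.exp ((d:ℝ) - 2*k) + Real.exp (-((d:ℝ) - 2*k))) * Real.exp (-(d:ℝ))) :=
          mul_le_mul_of_nonneg_left h5 (by positivity)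
      _ = ((d.choose k : ℝ) * (Real.exp ((d:ℝ) - 2*k) + Real.exp (-((d:ℝ) - 2*k)))) * Real.exp (-(d:ℝ)) := by
          ring
  have sum1 : ∑ k ∈ range (d+1), (d.choose k : ℝ) * Real.exp ((d:ℝ) - 2*k)
      = (Real.exp 1 + Real.exp (-1))^d := by
    have hbinom := add_pow (R := ℝ) (Real.exp (-1)) (Real.exp 1) d
    rw [show Real.exp 1 + Real.exp (-1) = Real.exp (-1) + Real.exp 1 from add_comm _ _, hbinom]
    apply Finset.sum_congr rfl
    intro k hk
    have hkd : k ≤ d := by simp at hk; omega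
    have e1 : Real.exp (-1:ℝ)^k = Real.exp (-(k:ℝ)) := by
      rw [← Real.exp_nat_mul]
      congr 1
      ring
    have e2 : Real.exp (1:ℝ)^(d-k) = Real.exp ((d:ℝ) - k) := by
      rw [← Real.exp_nat_mul, mul_one, Nat.cast_sub hkd]
    rw [e1, e2, ← Real.exp_add]
    have : -(k:ℝ) + ((d:ℝ) - k) = (d:ℝ) - 2*k := by ring
    rw [this]
    ring
  have sum2 : ∑ k ∈ range (d+1), (d.choose k : ℝ) * Real.exp (-((d:ℝ) - 2*k))
      = (Real.exp 1 + Real.exp (-1))^d := by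
    have hbinom := add_pow (R := ℝ) (Real.exp 1) (Real.exp (-1)) d
    rw [show (Real.exp 1 + Real.exp (-1))^d = (Real.exp (1:ℝ) + Real.exp (-1))^d from rfl, hbinom]
    apply Finset.sum_congr rfl
    intro k hk
    have hkd : k ≤ d := by simp at hk; omega
    have e1 : Real.exp (1:ℝ)^k = Real.exp ((k:ℝ)) := by
      rw [← Real.exp_nat_mul, mul_one]
    have e2 : Real.exp (-1:ℝ)^(d-k) = Real.exp (-((d:ℝ) - k)) := by
      rw [← Real.exp_nat_mul, Nat.cast_sub hkd]
      congr 1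
      ring
    rw [e1, e2, ← Real.exp_add]
    have : (k:ℝ) + -((d:ℝ) - k) = -((d:ℝ) - 2*k) := by ring
    rw [this]
    ring
  calc V d ≤ ∑ k ∈ range (d+1),
        ((d.choose k : ℝ) * (Real.exp ((d:ℝ) - 2*k) + Real.exp (-((d:ℝ) - 2*k)))) * Real.exp (-(d:ℝ)) :=
        Finset.sum_le_sum point
    _ = (∑ k ∈ range (d+1), ((d.choose k : ℝ) * Real.exp ((d:ℝ) - 2*k)
          + (d.choose k : ℝ) * Real.exp (-((d:ℝ) - 2*k)))) * Real.exp (-(d:ℝ)) := by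
        rw [← Finset.sum_mul]
        congr 1
        exact Finset.sum_congr rfl (fun k _ => by ring)
    _ = ((Real.exp 1 + Real.exp (-1))^d + (Real.exp 1 + Real.exp (-1))^d) * Real.exp (-(d:ℝ)) := by
        rw [Finset.sum_add_distrib, sum1, sum2]
    _ = 2 * Real.exp (-(d:ℝ)) * (Real.exp 1 + Real.exp (-1))^d := by ring


/-- the exponential rate -/
noncomputable def Crate : ℝ := 1 - Real.log (Real.cosh 1)

lemma Crate_pos : 0 < Crate := by
  rw [Crate, sub_pos]
  have h1 : Real.cosh 1 < Real.exp 1 := by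
    rw [Real.cosh_eq]
    have := Real.exp_lt_exp.mpr (show (-1:ℝ) < 1 by norm_num)
    linarith
  calc Real.log (Real.cosh 1) < Real.log (Real.exp 1) :=
        Real.log_lt_log (Real.cosh_pos 1) h1
    _ = 1 := Real.log_exp 1

lemma wV_le (d : ℕ) (hd : 1 ≤ d) :
    ((2:ℝ)^d)⁻¹ * V d ≤ 2 * Real.exp (-Crate * d) := by
  have h1 := V_le d hd
  have h2 : ((2:ℝ)^d)⁻¹ * V d ≤ ((2:ℝ)^d)⁻¹ * (2 * Real.exp (-(d:ℝ)) * (Real.exp 1 + Real.exp (-1))^d) :=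
    mul_le_mul_of_nonneg_left h1 (by positivity)
  refine le_trans h2 (le_of_eq ?_)
  have hcosh : (Real.exp 1 + Real.exp (-1))^d * ((2:ℝ)^d)⁻¹ = Real.cosh 1 ^ d := by
    rw [Real.cosh_eq, div_pow]
    ring
  have hcoshpow : Real.cosh 1 ^ d = Real.exp ((d:ℝ) * Real.log (Real.cosh 1)) := by
    rw [show ((d:ℝ) * Real.log (Real.cosh 1)) = Real.log (Real.cosh 1 ^ d) by
      rw [Real.log_pow], Real.exp_log (by positivity)]
  calc ((2:ℝ)^d)⁻¹ * (2 * Real.exp (-(d:ℝ)) * (Real.exp 1 + Real.exp (-1))^d)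
      = 2 * Real.exp (-(d:ℝ)) * ((Real.exp 1 + Real.exp (-1))^d * ((2:ℝ)^d)⁻¹) := by ring
    _ = 2 * Real.exp (-(d:ℝ)) * Real.exp ((d:ℝ) * Real.log (Real.cosh 1)) := by
        rw [hcosh, hcoshpow]
    _ = 2 * Real.exp (-Crate * d) := by
        rw [mul_assoc, ← Real.exp_add]
        rw [show -(d:ℝ) + (d:ℝ) * Real.log (Real.cosh 1) = -Crate * d by rw [Crate]; ring]

/-- the core estimate, for strict inequality -/
lemma core (d : ℕ) (hd : 1 ≤ d) (α β : ℝ) (hab : |α| + |β| < 1) :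
    |∑ k ∈ Finset.range (d + 1),
        (2 : ℝ) ^ (-(d : ℝ)) * (d.choose k : ℝ) * (-1 : ℝ) ^ k *
          hRelu ((1 - 2 * (k : ℝ) / d) * α + β)|
      ≤ 2 * Real.exp (-Crate * d) := by
  set w : ℝ := ((2:ℝ)^d)⁻¹ with hw
  have hwpos : 0 < w := by rw [hw]; positivity
  have hrpow : (2:ℝ) ^ (-(d:ℝ)) = w := by
    rw [hw, Real.rpow_neg (by norm_num), Real.rpow_natCast]
  -- the evaluation points
  set ρ : ℕ → ℝ := fun k => (1 - 2 * (k:ℝ) / d) * α + β with hρ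
  have hρlt : ∀ k ∈ Finset.range (d+1), |ρ k| < 1 := by
    intro k hk
    have hk' : k ≤ d := by simp at hk; omega
    calc |ρ k| ≤ |(1 - 2 * (k:ℝ) / d) * α| + |β| := abs_add_le _ _
      _ = |1 - 2 * (k:ℝ) / d| * |α| + |β| := by rw [abs_mul]
      _ ≤ 1 * |α| + |β| := by
          have := abs_y_le_one (d := d) (k := k) hd hk'
          nlinarith [abs_nonneg α, abs_nonneg β]
      _ < 1 := by rw [one_mul]; exact hab
  -- factor out w
  have hfactor : ∑ k ∈ Finset.range (d + 1),
      (2 : ℝ) ^ (-(d : ℝ)) * (d.choose k : ℝ) * (-1 : ℝ) ^ k * hRelu (ρ k)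
      = w * ∑ k ∈ Finset.range (d + 1), (-1 : ℝ) ^ k * (d.choose k : ℝ) * hRelu (ρ k) := by
    rw [Finset.mul_sum]
    apply Finset.sum_congr rfl
    intro k _
    rw [hrpow]
    ring
  rw [hfactor, abs_mul, abs_of_pos hwpos]
  -- decompose hRelu via its series
  have hseries : ∀ k ∈ Finset.range (d+1), hRelu (ρ k)
      = (1 + (π / 2) * ρ k + f0 (ρ k)) / (2 * π) :=
    fun k hk => hRelu_series (hρlt k hk)
  set S0 : ℝ := ∑ k ∈ Finset.range (d+1), (-1:ℝ)^k * (d.choose k : ℝ) * (ρ k)^0 with hS0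
  set S1 : ℝ := ∑ k ∈ Finset.range (d+1), (-1:ℝ)^k * (d.choose k : ℝ) * (ρ k)^1 with hS1
  set SF : ℝ := ∑ k ∈ Finset.range (d+1), (-1:ℝ)^k * (d.choose k : ℝ) * f0 (ρ k) with hSF
  have hdecomp : ∑ k ∈ Finset.range (d + 1), (-1 : ℝ) ^ k * (d.choose k : ℝ) * hRelu (ρ k)
      = (S0 + (π/2) * S1 + SF) / (2 * π) := by
    rw [hS0, hS1, hSF, Finset.mul_sum, ← Finset.sum_add_distrib, ← Finset.sum_add_distrib,
      Finset.sum_div]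
    apply Finset.sum_congr rfl
    intro k hk
    rw [hseries k hk]
    field_simp
  -- bounds on the pieces
  have hS0le : |S0| ≤ V d := by
    have := Tn_le d 0 hd α β
    calc |S0| = |∑ k ∈ Finset.range (d+1), (-1:ℝ)^k * (d.choose k : ℝ) * (ρ k)^0| := by rw [hS0]
      _ ≤ (|α|+|β|)^0 * V d := this
      _ = V d := by norm_num
  have hS1le : |S1| ≤ V d := by
    have h := Tn_le d 1 hd α β
    calc |S1| ≤ (|α|+|β|)^1 * V d := h
      _ ≤ 1 * V d := by
          apply mul_le_mul_of_nonneg_right _ (V_nonneg d)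
          rw [pow_one]
          exact hab.le
      _ = V d := one_mul _
  have hSFle : |SF| ≤ V d := by
    -- swap the finite sum and the tsum
    have hsummable : ∀ k ∈ Finset.range (d+1),
        Summable (fun m => (-1:ℝ)^k * (d.choose k : ℝ) * (em m * (ρ k)^(2*m+2))) :=
      fun k hk => (summable_f0 (hρlt k hk)).mul_left _
    have hswap : SF = ∑' m, ∑ k ∈ Finset.range (d+1),
        (-1:ℝ)^k * (d.choose k : ℝ) * (em m * (ρ k)^(2*m+2)) := by
      rw [hSF]
      rw [Summable.tsum_finsetSum hsummable]
      apply Finset.sum_congr rfl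
      intro k hk
      rw [f0, ← tsum_mul_left]
    have hterm : ∀ m, ∑ k ∈ Finset.range (d+1),
        (-1:ℝ)^k * (d.choose k : ℝ) * (em m * (ρ k)^(2*m+2))
        = em m * ∑ k ∈ Finset.range (d+1), (-1:ℝ)^k * (d.choose k : ℝ) * (ρ k)^(2*m+2) := by
      intro m
      rw [Finset.mul_sum]
      exact Finset.sum_congr rfl (fun k _ => by ring)
    have hsum2 : Summable (fun m => ∑ k ∈ Finset.range (d+1),
        (-1:ℝ)^k * (d.choose k : ℝ) * (em m * (ρ k)^(2*m+2))) :=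
      summable_sum hsummable
    have habs : ∀ m, |em m * ∑ k ∈ Finset.range (d+1),
        (-1:ℝ)^k * (d.choose k : ℝ) * (ρ k)^(2*m+2)| ≤ em m * V d := by
      intro m
      rw [abs_mul, abs_of_nonneg (em_nonneg m)]
      apply mul_le_mul_of_nonneg_left _ (em_nonneg m)
      calc |∑ k ∈ Finset.range (d+1), (-1:ℝ)^k * (d.choose k : ℝ) * (ρ k)^(2*m+2)|
          ≤ (|α|+|β|)^(2*m+2) * V d := Tn_le d (2*m+2) hd α β
        _ ≤ 1 * V d := by
            apply mul_le_mul_of_nonneg_right _ (V_nonneg d)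
            exact pow_le_one₀ (by positivity) hab.le
        _ = V d := one_mul _
    calc |SF| = |∑' m, em m * ∑ k ∈ Finset.range (d+1),
          (-1:ℝ)^k * (d.choose k : ℝ) * (ρ k)^(2*m+2)| := by
          rw [hswap]
          congr 1
          exact tsum_congr hterm
      _ ≤ ∑' m, |em m * ∑ k ∈ Finset.range (d+1),
          (-1:ℝ)^k * (d.choose k : ℝ) * (ρ k)^(2*m+2)| := by
          have hs : Summable (fun m => em m * ∑ k ∈ Finset.range (d+1),
              (-1:ℝ)^k * (d.choose k : ℝ) * (ρ k)^(2*m+2)) :=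
            hsum2.congr hterm
          have h2 : Summable (fun m => ‖em m * ∑ k ∈ Finset.range (d+1),
              (-1:ℝ)^k * (d.choose k : ℝ) * (ρ k)^(2*m+2)‖) := by
            simp only [Real.norm_eq_abs]
            exact hs.abs
          have h3 := norm_tsum_le_tsum_norm h2
          simp only [Real.norm_eq_abs] at h3
          exact h3
      _ ≤ ∑' m, em m * V d := by
          apply Summable.tsum_le_tsum habs
          · exact (hsum2.congr hterm).abs
          · exact summable_em.mul_right (V d)
      _ = (∑' m, em m) * V d := tsum_mul_right
      _ ≤ 1 * V d := mul_le_mul_of_nonneg_right tsum_em_le (V_nonneg d)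
      _ = V d := one_mul _
  -- combine
  rw [hdecomp]
  have hπ : (0:ℝ) < π := Real.pi_pos
  have hbound : |(S0 + (π/2) * S1 + SF) / (2 * π)| ≤ V d := by
    rw [abs_div, abs_of_pos (show (0:ℝ) < 2*π by linarith)]
    rw [div_le_iff₀ (show (0:ℝ) < 2*π by linarith)]
    have h3 : |S0 + (π/2) * S1 + SF| ≤ V d + (π/2) * V d + V d := by
      calc |S0 + (π/2) * S1 + SF| ≤ |S0 + (π/2) * S1| + |SF| := abs_add_le _ _
        _ ≤ |S0| + |(π/2) * S1| + |SF| := by linarith [abs_add_le S0 ((π/2) * S1)]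
        _ = |S0| + (π/2) * |S1| + |SF| := by
            rw [abs_mul, abs_of_pos (by linarith : (0:ℝ) < π/2)]
        _ ≤ V d + (π/2) * V d + V d := by
            have := mul_le_mul_of_nonneg_left hS1le (by linarith : (0:ℝ) ≤ π/2)
            linarith
    have hπ3 : (3:ℝ) < π := Real.pi_gt_three
    nlinarith [V_nonneg d, hπ3]
  calc w * |(S0 + (π/2) * S1 + SF) / (2 * π)| ≤ w * V d :=
        mul_le_mul_of_nonneg_left hbound hwpos.le
    _ ≤ 2 * Real.exp (-Crate * d) := wV_le d hd

lemma continuous_hRelu : Continuous hRelu := by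
  unfold hRelu
  apply Continuous.div_const
  apply Continuous.add
  · exact Real.continuous_sqrt.comp (by continuity)
  · exact continuous_id.mul (continuous_const.sub Real.continuous_arccos)

end Stmt13

/-- for every `α₀ > 0` there are `C, C' > 0` such that for all `d ≥ 1` and all
`α ≥ α₀`, `β` with `α + |β| ≤ 1`, the alternating binomial average of `h` at
`ρ = (1 − 2k/d)α + β` is at most `C' e^{−Cd}` in absolute value. -/
theorem stmt_13 (α₀ : ℝ) (hα₀ : 0 < α₀) :
    ∃ C C' : ℝ, 0 < C ∧ 0 < C' ∧
      ∀ (d : ℕ), 1 ≤ d → ∀ (α β : ℝ), α₀ ≤ α → α + |β| ≤ 1 →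
        |∑ k ∈ Finset.range (d + 1),
            (2 : ℝ) ^ (-(d : ℝ)) * (d.choose k : ℝ) * (-1 : ℝ) ^ k *
              hRelu ((1 - 2 * (k : ℝ) / d) * α + β)|
          ≤ C' * Real.exp (-C * d) := by
  refine ⟨Stmt13.Crate, 2, Stmt13.Crate_pos, by norm_num, ?_⟩
  intro d hd α β hα hab
  have hα0 : 0 < α := lt_of_lt_of_le hα₀ hα
  set Φ : ℝ → ℝ := fun t => ∑ k ∈ Finset.range (d + 1),
      (2 : ℝ) ^ (-(d : ℝ)) * (d.choose k : ℝ) * (-1 : ℝ) ^ k *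
        hRelu ((1 - 2 * (k : ℝ) / d) * (t * α) + t * β) with hΦ
  have hcont : Continuous Φ := by
    rw [hΦ]
    apply continuous_finset_sum
    intro k _
    apply Continuous.mul continuous_const
    exact Stmt13.continuous_hRelu.comp (by continuity)
  have hev : ∀ᶠ t in nhdsWithin (1:ℝ) (Set.Iio 1), |Φ t| ≤ 2 * Real.exp (-Stmt13.Crate * d) := by
    filter_upwards [Ioo_mem_nhdsLT_of_mem (show (1:ℝ) ∈ Set.Ioc 0 1 by norm_num)] with t ht
    have ht0 : 0 < t := ht.1
    have ht1 : t < 1 := ht.2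
    have hlt : |t * α| + |t * β| < 1 := by
      rw [abs_mul, abs_mul, abs_of_pos ht0, abs_of_pos hα0]
      calc t * α + t * |β| = t * (α + |β|) := by ring
        _ ≤ t * 1 := by
            apply mul_le_mul_of_nonneg_left hab ht0.le
        _ < 1 := by linarith
    exact Stmt13.core d hd (t * α) (t * β) hlt
  have hlim : Filter.Tendsto (fun t => |Φ t|) (nhdsWithin (1:ℝ) (Set.Iio 1))
      (nhds |Φ 1|) :=
    ((hcont.tendsto 1).mono_left nhdsWithin_le_nhds).abs
  have hfin : |Φ 1| ≤ 2 * Real.exp (-Stmt13.Crate * d) := le_of_tendsto hlim hev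
  have hΦ1 : Φ 1 = ∑ k ∈ Finset.range (d + 1),
      (2 : ℝ) ^ (-(d : ℝ)) * (d.choose k : ℝ) * (-1 : ℝ) ^ k *
        hRelu ((1 - 2 * (k : ℝ) / d) * α + β) := by
    rw [hΦ]
    simp only [one_mul]
  rw [hΦ1] at hfin
  exact hfin
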